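/- arXiv:1810.07569 — 5 statements merged into one kernel-verified Lean document; each statement's English description precedes it below -/
import Mathlib

section
/- Let θ ∈ (0,π), ψ ∈ [0,π), and φ ∈ (0,2π) ∪ (2π,4π). Define θ₋ = arccot( (−sin ψ · cos(φ/2) + cos ψ · sin(φ/2) · cos θ) / (sin(φ/2) · sin θ) ) with arccot taking values in (0,π), φ₋ = 2π + ( 2·arccos( cos(φ/2)·cos ψ + sin(φ/2)·sin ψ·cos θ ) − 2π )·sgn(sin(φ/2)), and φ₁ = 2ψ. Then R(θ,ψ,φ) = R(0,0,φ₁)·R(θ₋,0,φ₋). -/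
open Real

/-- The SU(2) rotation by angle φ about the axis (sin θ cos ψ, sin θ sin ψ, cos θ). -/
noncomputable def Rot (θ ψ φ : ℝ) : Matrix (Fin 2) (Fin 2) ℂ :=
  !![(Real.cos (φ/2) : ℂ) - Complex.I * (Real.sin (φ/2) : ℂ) * (Real.cos θ : ℂ),
     -Complex.I * (Real.sin (φ/2) : ℂ) * (Real.sin θ : ℂ) * Complex.exp (-(Complex.I * (ψ : ℂ)));
     -Complex.I * (Real.sin (φ/2) : ℂ) * (Real.sin θ : ℂ) * Complex.exp (Complex.I * (ψ : ℂ)),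
     (Real.cos (φ/2) : ℂ) + Complex.I * (Real.sin (φ/2) : ℂ) * (Real.cos θ : ℂ)]

/-- Inverse cotangent, valued in (0, π). -/
noncomputable def arccot (x : ℝ) : ℝ := π/2 - Real.arctan x

/-- The sign function. -/
noncomputable def sgn (x : ℝ) : ℝ := Real.sign x

/-! Left multiplication by R(0,0,2ψ) = diag(e^{-iψ}, e^{iψ}) only changes the phases of the rows,
so R(θ,ψ,φ) = R(0,0,2ψ) · R(β,0,γ) as soon as
  cos(γ/2) = A,  sin(γ/2) cos β = B,  sin(γ/2) sin β = C,
where A is the argument of arccos, B the numerator of the argument of arccot and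
C = sin(φ/2) sin θ its denominator. These are three coordinates of a unit quaternion, so
A² + B² + C² = 1. The formula for φ₋ gives cos(φ₋/2) = A and sin(φ₋/2) = sgn(C) √(B² + C²),
and θ₋ = arccot(B/C) satisfies (cos θ₋, sin θ₋) = (B, C) / (sgn(C) √(B² + C²)). -/

lemma Rot_eq_Rot_zero_mul_Rot {θ ψ φ β γ : ℝ}
    (hcos : cos (γ/2) = cos (φ/2) * cos ψ + sin (φ/2) * sin ψ * cos θ)
    (hsin_mul_cos : sin (γ/2) * cos β = -sin ψ * cos (φ/2) + cos ψ * sin (φ/2) * cos θ)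
    (hsin_mul_sin : sin (γ/2) * sin β = sin (φ/2) * sin θ) :
    Rot θ ψ φ = Rot 0 0 (2*ψ) * Rot β 0 γ := by
  have hψ := sin_sq_add_cos_sq ψ
  ext i j
  fin_cases i <;> fin_cases j <;>
    simp [Rot, Matrix.mul_apply, Fin.sum_univ_two, Complex.ext_iff, Complex.exp_re, Complex.exp_im,
      mul_div_cancel_left₀, -Complex.ofReal_cos, -Complex.ofReal_sin, hcos, hsin_mul_cos,
      hsin_mul_sin]
  · constructor
    · linear_combination -cos (φ/2) * hψ
    · linear_combination sin (φ/2) * cos θ * hψ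
  · constructor <;> ring
  · constructor <;> ring
  · constructor
    · linear_combination -cos (φ/2) * hψ
    · linear_combination -sin (φ/2) * cos θ * hψ

lemma sq_add_sq_add_sq_eq_one (α ψ θ : ℝ) :
    (cos α * cos ψ + sin α * sin ψ * cos θ)^2 + (-sin ψ * cos α + cos ψ * sin α * cos θ)^2
      + (sin α * sin θ)^2 = 1 := by
  linear_combination (cos α^2 + sin α^2 * cos θ^2) * sin_sq_add_cos_sq ψ
    + sin α^2 * sin_sq_add_cos_sq θ + sin_sq_add_cos_sq α

lemma sin_half_ne_zero {φ : ℝ} (hφ : φ ∈ Set.Ioo 0 (2*π) ∪ Set.Ioo (2*π) (4*π)) :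
    sin (φ/2) ≠ 0 := by
  rcases hφ with ⟨h₀, h₁⟩ | ⟨h₀, h₁⟩
  · exact (sin_pos_of_pos_of_lt_pi (by linarith) (by linarith)).ne'
  · have h := sin_pos_of_pos_of_lt_pi (x := φ/2 - π) (by linarith) (by linarith)
    rw [sin_sub_pi] at h
    exact (neg_pos.mp h).ne

lemma sgn_mul_of_pos (s : ℝ) {t : ℝ} (ht : 0 < t) : sgn (s * t) = sgn s := by
  rcases lt_trichotomy s 0 with hs | rfl | hs
  · simp only [sgn, Real.sign_of_neg hs, Real.sign_of_neg (mul_neg_of_neg_of_pos hs ht)]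
  · simp
  · simp only [sgn, Real.sign_of_pos hs, Real.sign_of_pos (mul_pos hs ht)]

lemma cos_sin_half_two_pi_add_sgn_mul {A s : ℝ} (hA : |A| ≤ 1) (hs : s ≠ 0) :
    cos ((2*π + (2 * arccos A - 2*π) * sgn s) / 2) = A ∧
      sin ((2*π + (2 * arccos A - 2*π) * sgn s) / 2) = sgn s * √(1 - A^2) := by
  obtain ⟨hA₀, hA₁⟩ := abs_le.mp hA
  rcases hs.lt_or_gt with hs | hs
  · have hangle : (2*π + (2 * arccos A - 2*π) * sgn s) / 2 = 2*π - arccos A := by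
      rw [sgn, Real.sign_of_neg hs]; ring
    rw [hangle, sgn, Real.sign_of_neg hs, cos_two_pi_sub, sin_two_pi_sub, cos_arccos hA₀ hA₁,
      sin_arccos]
    simp
  · have hangle : (2*π + (2 * arccos A - 2*π) * sgn s) / 2 = arccos A := by
      rw [sgn, Real.sign_of_pos hs]; ring
    rw [hangle, sgn, Real.sign_of_pos hs, cos_arccos hA₀ hA₁, sin_arccos]
    simp

lemma sgn_mul_sqrt_mul_cos_sin_arccot_div (B : ℝ) {C : ℝ} (hC : C ≠ 0) :
    sgn C * √(B^2 + C^2) * cos (arccot (B / C)) = B ∧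
      sgn C * √(B^2 + C^2) * sin (arccot (B / C)) = C := by
  have hsqrt : √(1 + (B / C)^2) = √(B^2 + C^2) / |C| := by
    rw [← sqrt_sq_eq_abs, ← sqrt_div' _ (sq_nonneg C)]
    congr 1
    field_simp
    ring
  rw [arccot, cos_pi_div_two_sub, sin_pi_div_two_sub, sin_arctan, cos_arctan, hsqrt]
  rcases hC.lt_or_gt with hC | hC
  · simp only [sgn, Real.sign_of_neg hC, abs_of_neg hC]
    constructor <;> field_simp
  · simp only [sgn, Real.sign_of_pos hC, abs_of_pos hC]
    constructor <;> field_simp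

theorem stmt1_general (θ ψ φ : ℝ) (hθ : θ ∈ Set.Ioo 0 π)
    (hφ : φ ∈ Set.Ioo 0 (2*π) ∪ Set.Ioo (2*π) (4*π)) :
    Rot θ ψ φ =
      Rot 0 0 (2*ψ) *
      Rot (arccot ((-Real.sin ψ * Real.cos (φ/2) + Real.cos ψ * Real.sin (φ/2) * Real.cos θ) /
              (Real.sin (φ/2) * Real.sin θ))) 0
          (2*π + (2 * Real.arccos (Real.cos (φ/2) * Real.cos ψ +
              Real.sin (φ/2) * Real.sin ψ * Real.cos θ) - 2*π) * sgn (Real.sin (φ/2))) := by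
  set A := cos (φ/2) * cos ψ + sin (φ/2) * sin ψ * cos θ
  set B := -sin ψ * cos (φ/2) + cos ψ * sin (φ/2) * cos θ
  set C := sin (φ/2) * sin θ
  have hsinθ : 0 < sin θ := sin_pos_of_pos_of_lt_pi hθ.1 hθ.2
  have hC : C ≠ 0 := mul_ne_zero (sin_half_ne_zero hφ) hsinθ.ne'
  have hsgn : sgn (sin (φ/2)) = sgn C := (sgn_mul_of_pos _ hsinθ).symm
  have hsum : A^2 + B^2 + C^2 = 1 := sq_add_sq_add_sq_eq_one (φ/2) ψ θ
  have hA : |A| ≤ 1 := (sq_le_one_iff_abs_le_one A).mp (by linarith [sq_nonneg B, sq_nonneg C])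
  have hradius : 1 - A^2 = B^2 + C^2 := by linarith
  obtain ⟨hcos, hsin⟩ := cos_sin_half_two_pi_add_sgn_mul hA (sin_half_ne_zero hφ)
  obtain ⟨hcos_arccot, hsin_arccot⟩ := sgn_mul_sqrt_mul_cos_sin_arccot_div B hC
  refine Rot_eq_Rot_zero_mul_Rot hcos ?_ ?_ <;> rw [hsin, hsgn, hradius]
  exacts [hcos_arccot, hsin_arccot]

theorem stmt1 (θ ψ φ : ℝ) (hθ : θ ∈ Set.Ioo 0 π) (hψ : ψ ∈ Set.Ico 0 π)
    (hφ : φ ∈ Set.Ioo 0 (2*π) ∪ Set.Ioo (2*π) (4*π)) :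
    Rot θ ψ φ =
      Rot 0 0 (2*ψ) *
      Rot (arccot ((-Real.sin ψ * Real.cos (φ/2) + Real.cos ψ * Real.sin (φ/2) * Real.cos θ) /
              (Real.sin (φ/2) * Real.sin θ))) 0
          (2*π + (2 * Real.arccos (Real.cos (φ/2) * Real.cos ψ +
              Real.sin (φ/2) * Real.sin ψ * Real.cos θ) - 2*π) * sgn (Real.sin (φ/2))) :=
  stmt1_general θ ψ φ hθ hφ
end

section
/- Fix Θ ∈ (0,π]. Let θ₁, θ₂ ∈ [0,Θ], φ₁, φ₂ ∈ (0,2π), and θ₁ ≠ θ₂, and set U = R(θ₁,0,φ₁)·R(θ₂,0,φ₂). (i) If θ₁ < θ₂ then there exist φ_z ∈ [0,4π), θ' ∈ [0,Θ] and φ' ∈ (0,2π) with U = R(0,0,φ_z)·R(θ',0,φ'). (ii) If θ₂ < θ₁ then there exist φ_m ∈ [0,4π), θ'' ∈ [0,Θ] and φ'' ∈ (0,2π) with U = R(Θ,0,φ_m)·R(θ'',0,φ''). -/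
open Real

/-!
Write `Rot θ 0 φ` as the unit quaternion `(cos (φ/2), sin (φ/2) cos θ, 0, sin (φ/2) sin θ)`.
Then `Rot 0 0 φz * Rot θ 0 φ` has `(c, d)`-part `r (-sin (φz/2), cos (φz/2))`, `r = sin (φ/2) sin θ`,
and `(a, b)`-part `(cos (φ/2), sin (φ/2) cos θ)` turned by `φz/2`. So every unit quaternion with
`(c, d) ≠ 0` factors this way, `φz/2` being the polar angle of `(d, -c)` and `(θ, φ/2)` spherical
coordinates; and `θ ≤ Θ` amounts to `sin (Θ - θ) ≥ 0`, i.e. to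
`cos Θ (c² + d²) ≤ sin Θ (a c + b d)`. For a product of rotations about axes at polar angles
`0 ≤ θ₁ < θ₂ ≤ Θ ≤ π`, the difference of the two sides is a positive semidefinite quadratic form
in the half-angle sines and cosines, with coefficients products of sines of angles in `[0, π]`.
Part (ii) reduces to part (i) by conjugating with the half-turn about the axis at polar angle
`Θ/2`, which exchanges `ẑ` and `m̂` and maps `θ` to `Θ - θ`.
-/

open Set

-- `a + b I + c J + d K` for the quaternion units `I = -iσ_z`, `J = iσ_y`, `K = -iσ_x`,
-- so that `su2Matrix_mul` is Hamilton's product.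
def su2Matrix (a b c d : ℝ) : Matrix (Fin 2) (Fin 2) ℂ :=
  !![⟨a, -b⟩, ⟨c, -d⟩; ⟨-c, -d⟩, ⟨a, b⟩]

theorem su2Matrix_mul (a b c d a' b' c' d' : ℝ) :
    su2Matrix a b c d * su2Matrix a' b' c' d' =
      su2Matrix (a * a' - b * b' - c * c' - d * d') (a * b' + b * a' + c * d' - d * c')
        (a * c' + c * a' + d * b' - b * d') (a * d' + d * a' + b * c' - c * b') := by
  rw [su2Matrix, su2Matrix, Matrix.mul_fin_two, su2Matrix]
  ext i j; fin_cases i <;> fin_cases j <;> apply Complex.ext <;> simp <;> ring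

theorem su2Matrix_neg_one : su2Matrix (-1) 0 0 0 = -1 := by
  ext i j; fin_cases i <;> fin_cases j <;> simp [su2Matrix, Complex.ext_iff]

theorem Rot_eq_su2Matrix (θ φ : ℝ) :
    Rot θ 0 φ = su2Matrix (cos (φ / 2)) (sin (φ / 2) * cos θ) 0 (sin (φ / 2) * sin θ) := by
  rw [Rot, su2Matrix]
  ext i j; fin_cases i <;> fin_cases j <;> apply Complex.ext <;>
    simp [-Complex.ofReal_cos, -Complex.ofReal_sin]

theorem Rot_zero_eq_su2Matrix (φ : ℝ) :
    Rot 0 0 φ = su2Matrix (cos (φ / 2)) (sin (φ / 2)) 0 0 := by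
  simp [Rot_eq_su2Matrix]

theorem Rot_zero_mul_Rot_zero (φ φ' : ℝ) : Rot 0 0 φ * Rot 0 0 φ' = Rot 0 0 (φ + φ') := by
  simp only [Rot_zero_eq_su2Matrix, su2Matrix_mul, add_div, cos_add, sin_add]
  congr 1 <;> ring

theorem Rot_pi (φ : ℝ) : Rot π 0 φ = Rot 0 0 (4 * π - φ) := by
  have h : (4 * π - φ) / 2 = -(φ / 2) + 2 * π := by ring
  simp [Rot_eq_su2Matrix, h]

theorem Rot_mul_Rot_half_pi (Θ θ φ : ℝ) :
    Rot θ 0 φ * Rot (Θ / 2) 0 π = Rot (Θ / 2) 0 π * Rot (Θ - θ) 0 φ := by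
  obtain ⟨t, ψ, rfl, rfl⟩ : ∃ t ψ, Θ = 2 * t ∧ θ = t - ψ := ⟨Θ / 2, Θ / 2 - θ, by ring, by ring⟩
  rw [show 2 * t / 2 = t by ring, show 2 * t - (t - ψ) = t + ψ by ring]
  simp only [Rot_eq_su2Matrix, su2Matrix_mul, sin_pi_div_two, cos_pi_div_two, cos_sub, sin_sub,
    cos_add, sin_add]
  congr 1 <;> ring

theorem Rot_half_pi_mul_self (Θ : ℝ) : Rot (Θ / 2) 0 π * Rot (Θ / 2) 0 π = -1 := by
  rw [Rot_eq_su2Matrix, su2Matrix_mul, ← su2Matrix_neg_one]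
  simp only [cos_pi_div_two, sin_pi_div_two]
  congr 1
  · linear_combination -sin_sq_add_cos_sq (Θ / 2)
  all_goals ring

theorem det_su2Matrix (a b c d : ℝ) :
    (su2Matrix a b c d).det = ((a ^ 2 + b ^ 2 + c ^ 2 + d ^ 2 : ℝ) : ℂ) := by
  rw [su2Matrix, Matrix.det_fin_two_of]
  apply Complex.ext <;> simp [sq] <;> ring

theorem det_Rot (θ φ : ℝ) : (Rot θ 0 φ).det = 1 := by
  rw [Rot_eq_su2Matrix, det_su2Matrix, mul_pow, mul_pow, zero_pow two_ne_zero, add_zero,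
    add_assoc, ← mul_add, cos_sq_add_sin_sq, mul_one, cos_sq_add_sin_sq, Complex.ofReal_one]

theorem Rot_mul_Rot (θ₁ θ₂ φ₁ φ₂ : ℝ) :
    Rot θ₁ 0 φ₁ * Rot θ₂ 0 φ₂ = su2Matrix
      (cos (φ₁ / 2) * cos (φ₂ / 2) - sin (φ₁ / 2) * sin (φ₂ / 2) * cos (θ₁ - θ₂))
      (cos (φ₁ / 2) * sin (φ₂ / 2) * cos θ₂ + sin (φ₁ / 2) * cos (φ₂ / 2) * cos θ₁)
      (sin (φ₁ / 2) * sin (φ₂ / 2) * sin (θ₁ - θ₂))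
      (cos (φ₁ / 2) * sin (φ₂ / 2) * sin θ₂ + sin (φ₁ / 2) * cos (φ₂ / 2) * sin θ₁) := by
  rw [Rot_eq_su2Matrix, Rot_eq_su2Matrix, su2Matrix_mul, cos_sub, sin_sub]
  congr 1 <;> ring

theorem quadratic_form_nonneg_of_sq_le_mul {x y Q R T : ℝ} (hQ : 0 ≤ Q) (hR : 0 ≤ R)
    (hT : T ^ 2 ≤ Q * R) : 0 ≤ x ^ 2 * Q + y ^ 2 * R + 2 * x * y * T := by
  rcases hQ.eq_or_lt with rfl | hQ
  · obtain rfl : T = 0 := by nlinarith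
    nlinarith
  · nlinarith [sq_nonneg (x * Q + y * T), mul_nonneg (sq_nonneg y) (sub_nonneg.2 hT)]

theorem cos_mul_sq_add_sq_le_sin_mul (c₁ s₁ c₂ s₂ : ℝ) {Θ θ₁ θ₂ : ℝ} (h₁ : 0 ≤ θ₁)
    (h₁₂ : θ₁ ≤ θ₂) (h₂ : θ₂ ≤ Θ) (hΘ : Θ ≤ π) :
    let a := c₁ * c₂ - s₁ * s₂ * cos (θ₁ - θ₂)
    let b := c₁ * s₂ * cos θ₂ + s₁ * c₂ * cos θ₁
    let c := s₁ * s₂ * sin (θ₁ - θ₂)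
    let d := c₁ * s₂ * sin θ₂ + s₁ * c₂ * sin θ₁
    cos Θ * (c ^ 2 + d ^ 2) ≤ sin Θ * (a * c + b * d) := by
  intro a b c d
  have hsin : ∀ {x}, 0 ≤ x → x ≤ π → 0 ≤ sin x := sin_nonneg_of_nonneg_of_le_pi
  have hΘ₀ := hsin (x := Θ) (by linarith) hΘ
  have hu := hsin (x := θ₁) h₁ (by linarith)
  have hv := hsin (x := θ₂) (by linarith) (by linarith)
  have hvu := hsin (x := θ₂ - θ₁) (by linarith) (by linarith)
  have hΘu := hsin (x := Θ - θ₁) (by linarith) (by linarith)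
  have hΘv := hsin (x := Θ - θ₂) (by linarith) (by linarith)
  have hΘvu := hsin (x := Θ - (θ₂ - θ₁)) (by linarith) (by linarith)
  have key : sin Θ * (a * c + b * d) - cos Θ * (c ^ 2 + d ^ 2) =
      (s₁ * s₂) ^ 2 * (sin (θ₂ - θ₁) * sin (Θ - (θ₂ - θ₁)))
      + ((c₁ * s₂) ^ 2 * (sin θ₂ * sin (Θ - θ₂)) + (s₁ * c₂) ^ 2 * (sin θ₁ * sin (Θ - θ₁))
        + 2 * (c₁ * s₂) * (s₁ * c₂) * (sin θ₁ * sin (Θ - θ₂))) := by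
    simp only [a, b, c, d, sin_sub, cos_sub]
    ring
  have hgram : (sin θ₂ * sin (Θ - θ₂)) * (sin θ₁ * sin (Θ - θ₁)) - (sin θ₁ * sin (Θ - θ₂)) ^ 2 =
      (sin θ₁ * sin (Θ - θ₂)) * (sin Θ * sin (θ₂ - θ₁)) := by
    simp only [sin_sub]
    ring
  have hcross := quadratic_form_nonneg_of_sq_le_mul (x := c₁ * s₂) (y := s₁ * c₂)
    (T := sin θ₁ * sin (Θ - θ₂))
    (mul_nonneg hv hΘv) (mul_nonneg hu hΘu)
    (by linarith [mul_nonneg (mul_nonneg hu hΘv) (mul_nonneg hΘ₀ hvu)])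
  linarith [mul_nonneg (sq_nonneg (s₁ * s₂)) (mul_nonneg hvu hΘvu)]

theorem exists_mem_Ioo_polar (p q : ℝ) (hq : 0 < q) :
    ∃ α ∈ Ioo 0 π, √(p ^ 2 + q ^ 2) * cos α = p ∧ √(p ^ 2 + q ^ 2) * sin α = q := by
  set z : ℂ := ⟨p, q⟩
  have hz : ‖z‖ = √(p ^ 2 + q ^ 2) := Complex.norm_eq_sqrt_sq_add_sq z
  have hsin : ‖z‖ * sin z.arg = q := Complex.norm_mul_sin_arg z
  refine ⟨z.arg, ⟨?_, Complex.arg_lt_pi_iff.2 (Or.inr hq.ne')⟩, hz ▸ Complex.norm_mul_cos_arg z,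
    hz ▸ hsin⟩
  by_contra! h
  have := sin_nonpos_of_nonpos_of_neg_pi_le h (Complex.neg_pi_lt_arg z).le
  nlinarith [norm_nonneg z]

theorem exists_mem_Ico_four_pi_polar (p q : ℝ) :
    ∃ φ ∈ Ico 0 (4 * π),
      √(p ^ 2 + q ^ 2) * cos (φ / 2) = p ∧ √(p ^ 2 + q ^ 2) * sin (φ / 2) = q := by
  set z : ℂ := ⟨p, q⟩
  have hz : ‖z‖ = √(p ^ 2 + q ^ 2) := Complex.norm_eq_sqrt_sq_add_sq z
  have hp : (0 : ℝ) < 4 * π := by positivity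
  have hhalf :
      toIcoMod hp 0 (2 * z.arg) / 2 = z.arg - (toIcoDiv hp 0 (2 * z.arg) : ℝ) * (2 * π) := by
    rw [← self_sub_toIcoDiv_zsmul, zsmul_eq_mul]
    ring
  refine ⟨toIcoMod hp 0 (2 * z.arg), by simpa using toIcoMod_mem_Ico hp 0 (2 * z.arg), ?_, ?_⟩
  · rw [hhalf, cos_sub_int_mul_two_pi, ← hz, Complex.norm_mul_cos_arg]
  · rw [hhalf, sin_sub_int_mul_two_pi, ← hz, Complex.norm_mul_sin_arg]

theorem exists_spherical_half_angles {x y r : ℝ} (hr : 0 < r) (h : x ^ 2 + y ^ 2 + r ^ 2 = 1) :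
    ∃ θ ∈ Ioo 0 π, ∃ φ ∈ Ioo 0 (2 * π),
      cos (φ / 2) = x ∧ sin (φ / 2) * cos θ = y ∧ sin (φ / 2) * sin θ = r := by
  obtain ⟨θ, hθ, hy, hr'⟩ := exists_mem_Ioo_polar y r hr
  set ρ := √(y ^ 2 + r ^ 2)
  have hρ : 0 < ρ := Real.sqrt_pos.2 (by positivity)
  obtain ⟨α, ⟨hα0, hαπ⟩, hx, hρ'⟩ := exists_mem_Ioo_polar x ρ hρ
  have hone : √(x ^ 2 + ρ ^ 2) = 1 := by
    rw [Real.sq_sqrt (by positivity), ← add_assoc, h, Real.sqrt_one]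
  rw [hone, one_mul] at hx hρ'
  refine ⟨θ, hθ, 2 * α, ⟨by linarith, by linarith⟩, ?_⟩
  rw [mul_div_cancel_left₀ α two_ne_zero, hρ']
  exact ⟨hx, hy, hr'⟩

theorem exists_su2Matrix_eq_Rot_zero_mul_Rot {Θ a b c d : ℝ} (hΘ : 0 ≤ Θ)
    (hdet : (su2Matrix a b c d).det = 1) (hcd : 0 < c ^ 2 + d ^ 2)
    (hbound : cos Θ * (c ^ 2 + d ^ 2) ≤ sin Θ * (a * c + b * d)) :
    ∃ φz θ φ : ℝ, φz ∈ Ico 0 (4 * π) ∧ θ ∈ Icc 0 Θ ∧ φ ∈ Ioo 0 (2 * π) ∧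
      su2Matrix a b c d = Rot 0 0 φz * Rot θ 0 φ := by
  have hunit : a ^ 2 + b ^ 2 + c ^ 2 + d ^ 2 = 1 := by
    rw [det_su2Matrix] at hdet
    exact_mod_cast hdet
  set r := √(c ^ 2 + d ^ 2) with hr_def
  have hr : 0 < r := Real.sqrt_pos.2 hcd
  have hr2 : r ^ 2 = c ^ 2 + d ^ 2 := Real.sq_sqrt hcd.le
  obtain ⟨φz, hφz, hd, hc⟩ := exists_mem_Ico_four_pi_polar d (-c)
  rw [neg_sq, add_comm, ← hr_def] at hd hc
  have hpyth := sin_sq_add_cos_sq (φz / 2)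
  set x := cos (φz / 2) * a + sin (φz / 2) * b
  set y := cos (φz / 2) * b - sin (φz / 2) * a
  have hxyr : x ^ 2 + y ^ 2 + r ^ 2 = 1 := by
    linear_combination (a ^ 2 + b ^ 2) * hpyth + hr2 + hunit
  obtain ⟨θ, ⟨hθ0, hθπ⟩, φ, hφ, hx, hy, hr'⟩ := exists_spherical_half_angles hr hxyr
  refine ⟨φz, θ, φ, hφz, ⟨hθ0.le, ?_⟩, hφ, ?_⟩
  · have hs : 0 < sin (φ / 2) := sin_pos_of_pos_of_lt_pi (by linarith [hφ.1]) (by linarith [hφ.2])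
    have hslack :
        r * (sin Θ * y - cos Θ * r) = sin Θ * (a * c + b * d) - cos Θ * (c ^ 2 + d ^ 2) := by
      rw [← hr2]
      linear_combination sin Θ * (b * hd - a * hc)
    have hrot : sin (φ / 2) * sin (Θ - θ) = sin Θ * y - cos Θ * r := by
      rw [sin_sub, ← hy, ← hr']
      ring
    have : 0 ≤ sin (Θ - θ) := by
      refine (mul_nonneg_iff_of_pos_left hs).1 (hrot ▸ (mul_nonneg_iff_of_pos_left hr).1 ?_)
      rw [hslack]
      linarith
    by_contra! h
    linarith [sin_neg_of_neg_of_neg_pi_lt (x := Θ - θ) (by linarith) (by linarith)]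
  · rw [Rot_zero_eq_su2Matrix, Rot_eq_su2Matrix, su2Matrix_mul, hx, hy, hr']
    congr 1
    · linear_combination -a * hpyth
    · linear_combination -b * hpyth
    · linear_combination hc
    · linear_combination -hd

theorem exists_Rot_zero_mul_Rot_of_lt {Θ θ₁ θ₂ φ₁ φ₂ : ℝ} (h₁ : 0 ≤ θ₁) (h₁₂ : θ₁ < θ₂)
    (h₂ : θ₂ ≤ Θ) (hΘ : Θ ≤ π) (hφ₁ : φ₁ ∈ Ioo 0 (2 * π)) (hφ₂ : φ₂ ∈ Ioo 0 (2 * π)) :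
    ∃ φz θ φ : ℝ, φz ∈ Ico 0 (4 * π) ∧ θ ∈ Icc 0 Θ ∧ φ ∈ Ioo 0 (2 * π) ∧
      Rot θ₁ 0 φ₁ * Rot θ₂ 0 φ₂ = Rot 0 0 φz * Rot θ 0 φ := by
  rcases (show θ₂ - θ₁ ≤ π by linarith).lt_or_eq with hlt | heq
  · have hc : sin (φ₁ / 2) * sin (φ₂ / 2) * sin (θ₁ - θ₂) ≠ 0 := by
      have hs₁ := sin_pos_of_pos_of_lt_pi (x := φ₁ / 2) (by linarith [hφ₁.1]) (by linarith [hφ₁.2])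
      have hs₂ := sin_pos_of_pos_of_lt_pi (x := φ₂ / 2) (by linarith [hφ₂.1]) (by linarith [hφ₂.2])
      have := sin_neg_of_neg_of_neg_pi_lt (x := θ₁ - θ₂) (by linarith) (by linarith)
      exact (mul_neg_of_pos_of_neg (mul_pos hs₁ hs₂) this).ne
    rw [Rot_mul_Rot]
    refine exists_su2Matrix_eq_Rot_zero_mul_Rot (by linarith) ?_
      (add_pos_of_pos_of_nonneg (sq_pos_of_ne_zero hc) (sq_nonneg _))
      (cos_mul_sq_add_sq_le_sin_mul _ _ _ _ h₁ h₁₂.le h₂ hΘ)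
    rw [← Rot_mul_Rot, Matrix.det_mul, det_Rot, det_Rot, one_mul]
  · -- the axes are `ẑ` and `-ẑ`, so both factors are rotations about `ẑ`
    obtain ⟨rfl, rfl⟩ : θ₁ = 0 ∧ θ₂ = π := ⟨by linarith, by linarith⟩
    refine ⟨4 * π - φ₂, 0, φ₁, ⟨by linarith [hφ₂.2], by linarith [hφ₂.1]⟩,
      ⟨le_rfl, by linarith⟩, hφ₁, ?_⟩
    rw [Rot_pi, Rot_zero_mul_Rot_zero, Rot_zero_mul_Rot_zero, add_comm]

theorem Rot_mul_Rot_of_reflect {Θ α β γ δ φ₁ φ₂ φ₃ φ₄ : ℝ}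
    (h : Rot (Θ - α) 0 φ₁ * Rot (Θ - β) 0 φ₂ = Rot (Θ - γ) 0 φ₃ * Rot (Θ - δ) 0 φ₄) :
    Rot α 0 φ₁ * Rot β 0 φ₂ = Rot γ 0 φ₃ * Rot δ 0 φ₄ := by
  set V := Rot (Θ / 2) 0 π
  have hV : ∀ θ φ, Rot θ 0 φ * V = V * Rot (Θ - θ) 0 φ := Rot_mul_Rot_half_pi Θ
  have hVV : V * V = -1 := Rot_half_pi_mul_self Θ
  have hcancel : ∀ X Y : Matrix (Fin 2) (Fin 2) ℂ, X * V = Y * V → X = Y := fun X Y hXY => by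
    calc X = -(X * V * V) := by rw [mul_assoc, hVV, mul_neg_one, neg_neg]
      _ = -(Y * V * V) := by rw [hXY]
      _ = Y := by rw [mul_assoc, hVV, mul_neg_one, neg_neg]
  refine hcancel _ _ ?_
  calc Rot α 0 φ₁ * Rot β 0 φ₂ * V = V * (Rot (Θ - α) 0 φ₁ * Rot (Θ - β) 0 φ₂) := by
        rw [mul_assoc, hV, ← mul_assoc, hV, mul_assoc]
    _ = V * (Rot (Θ - γ) 0 φ₃ * Rot (Θ - δ) 0 φ₄) := by rw [h]
    _ = Rot γ 0 φ₃ * Rot δ 0 φ₄ * V := by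
        rw [mul_assoc _ _ V, hV, ← mul_assoc (Rot γ 0 φ₃), hV, mul_assoc]

theorem stmt3_general (Θ : ℝ) (hΘ : Θ ∈ Set.Ioc 0 π)
    (θ₁ θ₂ : ℝ) (h1 : θ₁ ∈ Set.Icc 0 Θ) (h2 : θ₂ ∈ Set.Icc 0 Θ)
    (φ₁ φ₂ : ℝ) (hφ1 : φ₁ ∈ Set.Ioo 0 (2*π)) (hφ2 : φ₂ ∈ Set.Ioo 0 (2*π)) :
    (θ₁ < θ₂ →
      ∃ φz θ' φ' : ℝ, φz ∈ Set.Ico 0 (4*π) ∧ θ' ∈ Set.Icc 0 Θ ∧ φ' ∈ Set.Ioo 0 (2*π) ∧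
        Rot θ₁ 0 φ₁ * Rot θ₂ 0 φ₂ = Rot 0 0 φz * Rot θ' 0 φ') ∧
    (θ₂ < θ₁ →
      ∃ φm θ'' φ'' : ℝ, φm ∈ Set.Ico 0 (4*π) ∧ θ'' ∈ Set.Icc 0 Θ ∧ φ'' ∈ Set.Ioo 0 (2*π) ∧
        Rot θ₁ 0 φ₁ * Rot θ₂ 0 φ₂ = Rot Θ 0 φm * Rot θ'' 0 φ'') := by
  refine ⟨fun h₁₂ => exists_Rot_zero_mul_Rot_of_lt h1.1 h₁₂ h2.2 hΘ.2 hφ1 hφ2, fun h₂₁ => ?_⟩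
  obtain ⟨φm, θ, φ, hφm, hθ, hφ, h⟩ := exists_Rot_zero_mul_Rot_of_lt (Θ := Θ) (θ₁ := Θ - θ₁)
    (θ₂ := Θ - θ₂) (by linarith [h1.2]) (by linarith) (by linarith [h2.1]) hΘ.2 hφ1 hφ2
  refine ⟨φm, Θ - θ, φ, hφm, ⟨by linarith [hθ.2], by linarith [hθ.1]⟩, hφ, ?_⟩
  exact Rot_mul_Rot_of_reflect (Θ := Θ) (by rwa [sub_self, sub_sub_cancel])

theorem stmt3 (Θ : ℝ) (hΘ : Θ ∈ Set.Ioc 0 π)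
    (θ₁ θ₂ : ℝ) (h1 : θ₁ ∈ Set.Icc 0 Θ) (h2 : θ₂ ∈ Set.Icc 0 Θ) (hne : θ₁ ≠ θ₂)
    (φ₁ φ₂ : ℝ) (hφ1 : φ₁ ∈ Set.Ioo 0 (2*π)) (hφ2 : φ₂ ∈ Set.Ioo 0 (2*π)) :
    (θ₁ < θ₂ →
      ∃ φz θ' φ' : ℝ, φz ∈ Set.Ico 0 (4*π) ∧ θ' ∈ Set.Icc 0 Θ ∧ φ' ∈ Set.Ioo 0 (2*π) ∧
        Rot θ₁ 0 φ₁ * Rot θ₂ 0 φ₂ = Rot 0 0 φz * Rot θ' 0 φ') ∧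
    (θ₂ < θ₁ →
      ∃ φm θ'' φ'' : ℝ, φm ∈ Set.Ico 0 (4*π) ∧ θ'' ∈ Set.Icc 0 Θ ∧ φ'' ∈ Set.Ioo 0 (2*π) ∧
        Rot θ₁ 0 φ₁ * Rot θ₂ 0 φ₂ = Rot Θ 0 φm * Rot θ'' 0 φ'') :=
  stmt3_general Θ hΘ θ₁ θ₂ h1 h2 φ₁ φ₂ hφ1 hφ2
end

section
/- Fix Θ ∈ (0,π]. Let θ₁, θ₂ ∈ [0,Θ] and φ₁, φ₂ ∈ [0,4π), and set U = R(θ₁,0,φ₁)·R(θ₂,0,φ₂). Then at least one of the following holds: (a) there exist φ_m, φ_z ∈ [0,4π), θ', θ'' ∈ [0,Θ], φ', φ'' ∈ [0,4π) such that U = R(Θ,0,φ_m)·R(θ',0,φ') and U = R(θ'',0,φ'')·R(0,0,φ_z); or (b) there exist φ_z, φ_m ∈ [0,4π), θ', θ'' ∈ [0,Θ], φ', φ'' ∈ [0,4π) such that U = R(0,0,φ_z)·R(θ',0,φ') and U = R(θ'',0,φ'')·R(Θ,0,φ_m). -/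
/-!
Identify `SU(2)` with the unit quaternions, `Rot θ 0 φ` becoming
`cos (φ/2) + sin (φ/2) (sin θ i + cos θ k)`. A unit quaternion `u = u₀ + u₁ i + u₂ j + u₃ k`
factors as `R_z · R(θ)`: the `z`-rotation by twice the polar angle of `(u₁, u₂)` kills the
`j`-component of the second factor, whose axis then lies within angle `Θ` of `ẑ` exactly when
`(u₁² + u₂²) cos Θ ≤ (u₁ u₃ - u₀ u₂) sin Θ`. For a product `R(a, α) R(b, β)` with
`0 ≤ a ≤ b ≤ Θ` the difference of the two sides is a sum of squares times products of sines of
angles in `[0, π]`, plus a cross term dominated through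
`sin b sin (Θ - a) - sin a sin (Θ - b) = sin Θ sin (b - a)`. Conjugating by the half-turn about
the axis at angle `Θ/2` sends axis angles `θ ↦ Θ - θ` and so exchanges `ẑ` and `m̂`, and
transposing reverses products; this gives the other factorisations, and comparing `θ₁` with `θ₂`
decides between (a) and (b).
-/

open Real

open Quaternion Set Matrix

lemma exists_mem_Ico_norm_mul_cos_eq (z : ℂ) :
    ∃ ψ ∈ Ico 0 (2 * π), ‖z‖ * cos ψ = z.re ∧ ‖z‖ * sin ψ = z.im := by
  rcases le_or_gt 0 (Complex.arg z) with h | h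
  · exact ⟨_, ⟨h, (Complex.arg_le_pi z).trans_lt (by linarith [pi_pos])⟩,
      Complex.norm_mul_cos_arg z, Complex.norm_mul_sin_arg z⟩
  · refine ⟨Complex.arg z + 2 * π, ⟨by linarith [Complex.neg_pi_lt_arg z], by linarith⟩, ?_, ?_⟩
    · rw [cos_add_two_pi, Complex.norm_mul_cos_arg]
    · rw [sin_add_two_pi, Complex.norm_mul_sin_arg]

lemma exists_mem_Ico_cos_half_sin_half {x y : ℝ} (h : x ^ 2 + y ^ 2 = 1) :
    ∃ φ ∈ Ico 0 (4 * π), cos (φ / 2) = x ∧ sin (φ / 2) = y := by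
  obtain ⟨ψ, ⟨hψ0, hψ⟩, hcos, hsin⟩ := exists_mem_Ico_norm_mul_cos_eq ⟨x, y⟩
  have hnorm : ‖(⟨x, y⟩ : ℂ)‖ = 1 := by
    rw [Complex.norm_eq_sqrt_sq_add_sq]; simp [h]
  have hhalf : 2 * ψ / 2 = ψ := by ring
  rw [hnorm, one_mul] at hcos hsin
  exact ⟨2 * ψ, ⟨by linarith, by linarith⟩, by rw [hhalf, hcos], by rw [hhalf, hsin]⟩

lemma arg_le_of_im_mul_cos_le {z : ℂ} {Θ : ℝ} (hΘ : Θ ∈ Ioc 0 π)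
    (h : z.im * cos Θ ≤ z.re * sin Θ) : Complex.arg z ≤ Θ := by
  by_contra! hlt
  have hz : z ≠ 0 := by rintro rfl; rw [Complex.arg_zero] at hlt; linarith [hΘ.1]
  have hsin : 0 < sin (Complex.arg z - Θ) :=
    sin_pos_of_pos_of_lt_pi (by linarith) (by linarith [Complex.arg_le_pi z, hΘ.1])
  have hexpand : ‖z‖ * sin (Complex.arg z - Θ) = z.im * cos Θ - z.re * sin Θ := by
    rw [sin_sub, ← Complex.norm_mul_cos_arg, ← Complex.norm_mul_sin_arg]; ring
  have := mul_pos (norm_pos_iff.mpr hz) hsin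
  linarith

lemma quadratic_form_nonneg {A B X Y C : ℝ} (hX : 0 ≤ X) (hY : 0 ≤ Y) (h : C ^ 2 ≤ X * Y) :
    0 ≤ A ^ 2 * X + B ^ 2 * Y + 2 * A * B * C := by
  rcases hX.eq_or_lt with rfl | hX
  · obtain rfl : C = 0 := by nlinarith
    simpa using mul_nonneg (sq_nonneg B) hY
  · nlinarith [sq_nonneg (A * X + B * C), sq_nonneg B, mul_pos hX hX]

/-- The matrix `q.re - i (q.imI σₓ + q.imJ σ_y + q.imK σ_z)`, with `σ` the Pauli matrices. -/
noncomputable def quatMat (q : ℍ[ℝ]) : Matrix (Fin 2) (Fin 2) ℂ :=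
  !![(q.re : ℂ) - Complex.I * q.imK, -(q.imJ : ℂ) - Complex.I * q.imI;
     (q.imJ : ℂ) - Complex.I * q.imI, (q.re : ℂ) + Complex.I * q.imK]

lemma quatMat_mul (p q : ℍ[ℝ]) : quatMat (p * q) = quatMat p * quatMat q := by
  ext i j
  fin_cases i <;> fin_cases j <;>
    simp [quatMat, Matrix.mul_apply, Fin.sum_univ_two, re_mul, imI_mul, imJ_mul, imK_mul] <;>
    ring_nf <;> simp only [Complex.I_sq] <;> ring

noncomputable def rotQuat (θ φ : ℝ) : ℍ[ℝ] :=
  ⟨cos (φ / 2), sin (φ / 2) * sin θ, 0, sin (φ / 2) * cos θ⟩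

section rotQuat

variable (θ φ : ℝ)

@[simp] lemma re_rotQuat : (rotQuat θ φ).re = cos (φ / 2) := rfl
@[simp] lemma imI_rotQuat : (rotQuat θ φ).imI = sin (φ / 2) * sin θ := rfl
@[simp] lemma imJ_rotQuat : (rotQuat θ φ).imJ = 0 := rfl
@[simp] lemma imK_rotQuat : (rotQuat θ φ).imK = sin (φ / 2) * cos θ := rfl

lemma Rot_eq_quatMat_rotQuat : Rot θ 0 φ = quatMat (rotQuat θ φ) := by
  ext i j
  fin_cases i <;> fin_cases j <;> simp [Rot, quatMat, rotQuat] <;> ring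

lemma normSq_rotQuat : normSq (rotQuat θ φ) = 1 := by
  rw [normSq_def', rotQuat]
  linear_combination sin (φ / 2) ^ 2 * sin_sq_add_cos_sq θ + cos_sq_add_sin_sq (φ / 2)

lemma rotQuat_zero_right : rotQuat θ 0 = 1 := by
  ext <;> simp

lemma transpose_Rot : (Rot θ 0 φ)ᵀ = Rot θ 0 φ := by
  ext i j
  fin_cases i <;> fin_cases j <;> simp [Rot]

end rotQuat

lemma exists_rotQuat_eq {Θ : ℝ} (hΘ : Θ ∈ Ioc 0 π) {q : ℍ[ℝ]} (hq : normSq q = 1)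
    (hJ : q.imJ = 0) (hI : 0 ≤ q.imI) (hIK : q.imI * cos Θ ≤ q.imK * sin Θ) :
    ∃ θ ∈ Icc 0 Θ, ∃ φ ∈ Ico 0 (4 * π), rotQuat θ φ = q := by
  set z : ℂ := ⟨q.imK, q.imI⟩
  have hz : ‖z‖ ^ 2 = q.imK ^ 2 + q.imI ^ 2 := by rw [Complex.sq_norm, Complex.normSq_mk]; ring
  rw [normSq_def', hJ] at hq
  obtain ⟨φ, hφ, hcos, hsin⟩ := exists_mem_Ico_cos_half_sin_half (x := q.re) (y := ‖z‖)
    (by linear_combination hq + hz)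
  refine ⟨Complex.arg z, ⟨Complex.arg_nonneg_iff.mpr hI, arg_le_of_im_mul_cos_le hΘ hIK⟩,
    φ, hφ, ?_⟩
  ext
  · rw [re_rotQuat, hcos]
  · rw [imI_rotQuat, hsin, Complex.norm_mul_sin_arg]
  · rw [imJ_rotQuat, hJ]
  · rw [imK_rotQuat, hsin, Complex.norm_mul_cos_arg]

lemma exists_eq_rotQuat_zero_mul_rotQuat {Θ : ℝ} (hΘ : Θ ∈ Ioc 0 π) {u : ℍ[ℝ]}
    (hu : normSq u = 1)
    (h : (u.imI ^ 2 + u.imJ ^ 2) * cos Θ ≤ (u.imI * u.imK - u.re * u.imJ) * sin Θ) :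
    ∃ φz ∈ Ico 0 (4 * π), ∃ θ ∈ Icc 0 Θ, ∃ φ ∈ Ico 0 (4 * π),
      u = rotQuat 0 φz * rotQuat θ φ := by
  rcases (add_nonneg (sq_nonneg u.imI) (sq_nonneg u.imJ)).eq_or_lt with hN | hN
  · have hI : u.imI = 0 := by nlinarith [sq_nonneg u.imJ]
    have hJ : u.imJ = 0 := by nlinarith [sq_nonneg u.imI]
    rw [normSq_def', hI, hJ] at hu
    obtain ⟨φz, hφz, hcos, hsin⟩ :=
      exists_mem_Ico_cos_half_sin_half (x := u.re) (y := u.imK) (by linear_combination hu)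
    refine ⟨φz, hφz, 0, ⟨le_rfl, hΘ.1.le⟩, 0, ⟨le_rfl, by positivity⟩, ?_⟩
    rw [rotQuat_zero_right, mul_one]
    ext <;> simp [hcos, hsin, hI, hJ]
  · obtain ⟨ψ, ⟨hψ0, hψ⟩, hcos, hsin⟩ := exists_mem_Ico_norm_mul_cos_eq ⟨u.imI, u.imJ⟩
    set N := ‖(⟨u.imI, u.imJ⟩ : ℂ)‖
    have hN2 : N ^ 2 = u.imI ^ 2 + u.imJ ^ 2 := by
      rw [Complex.sq_norm, Complex.normSq_mk]; ring
    have hNpos : 0 < N := by nlinarith [norm_nonneg (⟨u.imI, u.imJ⟩ : ℂ)]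
    have hcs := cos_sq_add_sin_sq ψ
    set w := rotQuat 0 (2 * ψ)
    have hw₀ : (star w).re = cos ψ := by simp [w]
    have hw₁ : (star w).imI = 0 := by simp [w]
    have hw₂ : (star w).imJ = 0 := by simp [w]
    have hw₃ : (star w).imK = -sin ψ := by simp [w]
    have hI : (star w * u).imI = N := by
      simp only [imI_mul, hw₀, hw₁, hw₂, hw₃]
      linear_combination -cos ψ * hcos - sin ψ * hsin + N * hcs
    have hJ : (star w * u).imJ = 0 := by
      simp only [imJ_mul, hw₀, hw₁, hw₂, hw₃]
      linear_combination -cos ψ * hsin + sin ψ * hcos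
    have hK : (star w * u).imK = cos ψ * u.imK - sin ψ * u.re := by
      simp only [imK_mul, hw₀, hw₁, hw₂, hw₃]; ring
    have hcond : N * (N * cos Θ) ≤ N * ((cos ψ * u.imK - sin ψ * u.re) * sin Θ) := by
      linear_combination h + cos Θ * hN2 - sin Θ * u.imK * hcos + sin Θ * u.re * hsin
    obtain ⟨θ, hθ, φ, hφ, hrot⟩ := exists_rotQuat_eq hΘ (q := star w * u)
      (by rw [map_mul, normSq_star, normSq_rotQuat, hu, one_mul]) hJ (hI ▸ hNpos.le)
      (by rw [hI, hK]; exact le_of_mul_le_mul_left hcond hNpos)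
    refine ⟨2 * ψ, ⟨by linarith, by linarith⟩, θ, hθ, φ, hφ, ?_⟩
    rw [hrot, ← mul_assoc, self_mul_star, normSq_rotQuat]
    simp

lemma imI_sq_add_imJ_sq_mul_cos_le_of_rotQuat_mul {Θ a b : ℝ} (hΘ : Θ ≤ π) (ha : 0 ≤ a) (hab : a ≤ b)
    (hb : b ≤ Θ) (α β : ℝ) :
    let u := rotQuat a α * rotQuat b β
    (u.imI ^ 2 + u.imJ ^ 2) * cos Θ ≤ (u.imI * u.imK - u.re * u.imJ) * sin Θ := by
  intro u
  have hsin : ∀ x, 0 ≤ x → x ≤ Θ → 0 ≤ sin x := fun x h0 h1 =>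
    sin_nonneg_of_nonneg_of_le_pi h0 (h1.trans hΘ)
  set A := cos (α / 2) * sin (β / 2)
  set B := cos (β / 2) * sin (α / 2)
  have hsos : (u.imI * u.imK - u.re * u.imJ) * sin Θ - (u.imI ^ 2 + u.imJ ^ 2) * cos Θ =
      A ^ 2 * (sin b * sin (Θ - b)) + B ^ 2 * (sin a * sin (Θ - a))
        + 2 * A * B * (sin a * sin (Θ - b))
        + (sin (α / 2) * sin (β / 2)) ^ 2 * (sin (b - a) * sin (Θ - (b - a))) := by
    simp only [u, A, B, re_mul, imI_mul, imJ_mul,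
      imK_mul, re_rotQuat, imI_rotQuat, imJ_rotQuat, imK_rotQuat, sin_sub, cos_sub]
    ring
  have hsin_sub : sin b * sin (Θ - a) - sin a * sin (Θ - b) = sin Θ * sin (b - a) := by
    simp only [sin_sub]; ring
  have hsa := hsin a ha (by linarith)
  have hsb := hsin b (by linarith) hb
  have hsΘa := hsin (Θ - a) (by linarith) (by linarith)
  have hsΘb := hsin (Θ - b) (by linarith) (by linarith)
  have hsba := hsin (b - a) (by linarith) (by linarith)
  have hsΘba := hsin (Θ - (b - a)) (by linarith) (by linarith)
  have hsΘ := hsin Θ (by linarith) le_rfl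
  have hquad := quadratic_form_nonneg (A := A) (B := B) (mul_nonneg hsb hsΘb) (mul_nonneg hsa hsΘa)
    (C := sin a * sin (Θ - b)) (by
      have := mul_nonneg (mul_nonneg hsa hsΘb) (mul_nonneg hsΘ hsba)
      linear_combination this - sin a * sin (Θ - b) * hsin_sub)
  linarith [mul_nonneg (sq_nonneg (sin (α / 2) * sin (β / 2))) (mul_nonneg hsba hsΘba)]

lemma exists_rotQuat_mul_eq_rotQuat_zero_mul {Θ a b : ℝ} (hΘ : Θ ∈ Ioc 0 π) (ha : 0 ≤ a)
    (hab : a ≤ b) (hb : b ≤ Θ) (α β : ℝ) :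
    ∃ φz ∈ Ico 0 (4 * π), ∃ θ ∈ Icc 0 Θ, ∃ φ ∈ Ico 0 (4 * π),
      rotQuat a α * rotQuat b β = rotQuat 0 φz * rotQuat θ φ :=
  exists_eq_rotQuat_zero_mul_rotQuat hΘ (by rw [map_mul, normSq_rotQuat, normSq_rotQuat, one_mul])
    (imI_sq_add_imJ_sq_mul_cos_le_of_rotQuat_mul hΘ.2 ha hab hb α β)

lemma rotQuat_pi_mul (μ θ φ : ℝ) :
    rotQuat μ π * rotQuat θ φ = rotQuat (2 * μ - θ) φ * rotQuat μ π := by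
  have h := sin_sq_add_cos_sq μ
  ext <;> simp only [re_mul, imI_mul, imJ_mul,
      imK_mul, re_rotQuat, imI_rotQuat, imJ_rotQuat, imK_rotQuat, cos_pi_div_two,
      sin_pi_div_two, sin_sub, cos_sub, sin_two_mul, cos_two_mul]
  · linear_combination 2 * sin (φ / 2) * cos μ * cos θ * h
  · ring
  · linear_combination -2 * sin (φ / 2) * cos μ * sin θ * h
  · ring

lemma exists_rotQuat_mul_eq_rotQuat_mul {Θ a b : ℝ} (hΘ : Θ ∈ Ioc 0 π) (ha : 0 ≤ a)
    (hab : a ≤ b) (hb : b ≤ Θ) (α β : ℝ) :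
    ∃ φm ∈ Ico 0 (4 * π), ∃ θ ∈ Icc 0 Θ, ∃ φ ∈ Ico 0 (4 * π),
      rotQuat b β * rotQuat a α = rotQuat Θ φm * rotQuat θ φ := by
  obtain ⟨φm, hφm, θ, hθ, φ, hφ, h⟩ :=
    exists_rotQuat_mul_eq_rotQuat_zero_mul (a := Θ - b) (b := Θ - a) hΘ (sub_nonneg.2 hb)
      (by linarith) (by linarith) β α
  refine ⟨φm, hφm, Θ - θ, ⟨by linarith [hθ.2], by linarith [hθ.1]⟩, φ, hφ, ?_⟩
  have reflect₁ : ∀ θ₁ φ₁, rotQuat (Θ / 2) π * rotQuat θ₁ φ₁ =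
      rotQuat (Θ - θ₁) φ₁ * rotQuat (Θ / 2) π := fun θ₁ φ₁ => by
    rw [rotQuat_pi_mul, mul_div_cancel₀ Θ two_ne_zero]
  have reflect : ∀ θ₁ φ₁ θ₂ φ₂, rotQuat (Θ / 2) π * (rotQuat θ₁ φ₁ * rotQuat θ₂ φ₂) =
      rotQuat (Θ - θ₁) φ₁ * rotQuat (Θ - θ₂) φ₂ * rotQuat (Θ / 2) π := fun θ₁ φ₁ θ₂ φ₂ => by
    rw [← mul_assoc, reflect₁, mul_assoc, reflect₁, ← mul_assoc]
  have hw : rotQuat (Θ / 2) π ≠ 0 := by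
    intro h0; simpa [h0] using normSq_rotQuat (Θ / 2) π
  refine mul_left_cancel₀ hw ?_
  rw [reflect, reflect, h, sub_self, sub_sub_cancel]

lemma Rot_mul_Rot_of_rotQuat {a b c d α β γ δ : ℝ}
    (h : rotQuat a α * rotQuat b β = rotQuat c γ * rotQuat d δ) :
    Rot a 0 α * Rot b 0 β = Rot c 0 γ * Rot d 0 δ := by
  simp only [Rot_eq_quatMat_rotQuat, ← quatMat_mul, h]

lemma Rot_mul_Rot_rev {a b c d α β γ δ : ℝ}
    (h : Rot a 0 α * Rot b 0 β = Rot c 0 γ * Rot d 0 δ) :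
    Rot b 0 β * Rot a 0 α = Rot d 0 δ * Rot c 0 γ := by
  simpa only [transpose_mul, transpose_Rot] using congrArg transpose h

theorem stmt4_general (Θ : ℝ) (hΘ : Θ ∈ Set.Ioc 0 π)
    (θ₁ θ₂ : ℝ) (h1 : θ₁ ∈ Set.Icc 0 Θ) (h2 : θ₂ ∈ Set.Icc 0 Θ)
    (φ₁ φ₂ : ℝ) :
    (∃ φm φz θ' θ'' φ' φ'' : ℝ,
      φm ∈ Set.Ico 0 (4*π) ∧ φz ∈ Set.Ico 0 (4*π) ∧
      θ' ∈ Set.Icc 0 Θ ∧ θ'' ∈ Set.Icc 0 Θ ∧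
      φ' ∈ Set.Ico 0 (4*π) ∧ φ'' ∈ Set.Ico 0 (4*π) ∧
      Rot θ₁ 0 φ₁ * Rot θ₂ 0 φ₂ = Rot Θ 0 φm * Rot θ' 0 φ' ∧
      Rot θ₁ 0 φ₁ * Rot θ₂ 0 φ₂ = Rot θ'' 0 φ'' * Rot 0 0 φz) ∨
    (∃ φz φm θ' θ'' φ' φ'' : ℝ,
      φz ∈ Set.Ico 0 (4*π) ∧ φm ∈ Set.Ico 0 (4*π) ∧
      θ' ∈ Set.Icc 0 Θ ∧ θ'' ∈ Set.Icc 0 Θ ∧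
      φ' ∈ Set.Ico 0 (4*π) ∧ φ'' ∈ Set.Ico 0 (4*π) ∧
      Rot θ₁ 0 φ₁ * Rot θ₂ 0 φ₂ = Rot 0 0 φz * Rot θ' 0 φ' ∧
      Rot θ₁ 0 φ₁ * Rot θ₂ 0 φ₂ = Rot θ'' 0 φ'' * Rot Θ 0 φm) := by
  rcases le_total θ₁ θ₂ with hle | hle
  · obtain ⟨φz, hφz, θ', hθ', φ', hφ', hz⟩ :=
      exists_rotQuat_mul_eq_rotQuat_zero_mul hΘ h1.1 hle h2.2 φ₁ φ₂
    obtain ⟨φm, hφm, θ'', hθ'', φ'', hφ'', hm⟩ :=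
      exists_rotQuat_mul_eq_rotQuat_mul hΘ h1.1 hle h2.2 φ₁ φ₂
    exact Or.inr ⟨φz, φm, θ', θ'', φ', φ'', hφz, hφm, hθ', hθ'', hφ', hφ'',
      Rot_mul_Rot_of_rotQuat hz, Rot_mul_Rot_rev (Rot_mul_Rot_of_rotQuat hm)⟩
  · obtain ⟨φm, hφm, θ', hθ', φ', hφ', hm⟩ :=
      exists_rotQuat_mul_eq_rotQuat_mul hΘ h2.1 hle h1.2 φ₂ φ₁
    obtain ⟨φz, hφz, θ'', hθ'', φ'', hφ'', hz⟩ :=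
      exists_rotQuat_mul_eq_rotQuat_zero_mul hΘ h2.1 hle h1.2 φ₂ φ₁
    exact Or.inl ⟨φm, φz, θ', θ'', φ', φ'', hφm, hφz, hθ', hθ'', hφ', hφ'',
      Rot_mul_Rot_of_rotQuat hm, Rot_mul_Rot_rev (Rot_mul_Rot_of_rotQuat hz)⟩

theorem stmt4 (Θ : ℝ) (hΘ : Θ ∈ Set.Ioc 0 π)
    (θ₁ θ₂ : ℝ) (h1 : θ₁ ∈ Set.Icc 0 Θ) (h2 : θ₂ ∈ Set.Icc 0 Θ)
    (φ₁ φ₂ : ℝ) (hφ1 : φ₁ ∈ Set.Ico 0 (4*π)) (hφ2 : φ₂ ∈ Set.Ico 0 (4*π)) :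
    (∃ φm φz θ' θ'' φ' φ'' : ℝ,
      φm ∈ Set.Ico 0 (4*π) ∧ φz ∈ Set.Ico 0 (4*π) ∧
      θ' ∈ Set.Icc 0 Θ ∧ θ'' ∈ Set.Icc 0 Θ ∧
      φ' ∈ Set.Ico 0 (4*π) ∧ φ'' ∈ Set.Ico 0 (4*π) ∧
      Rot θ₁ 0 φ₁ * Rot θ₂ 0 φ₂ = Rot Θ 0 φm * Rot θ' 0 φ' ∧
      Rot θ₁ 0 φ₁ * Rot θ₂ 0 φ₂ = Rot θ'' 0 φ'' * Rot 0 0 φz) ∨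
    (∃ φz φm θ' θ'' φ' φ'' : ℝ,
      φz ∈ Set.Ico 0 (4*π) ∧ φm ∈ Set.Ico 0 (4*π) ∧
      θ' ∈ Set.Icc 0 Θ ∧ θ'' ∈ Set.Icc 0 Θ ∧
      φ' ∈ Set.Ico 0 (4*π) ∧ φ'' ∈ Set.Ico 0 (4*π) ∧
      Rot θ₁ 0 φ₁ * Rot θ₂ 0 φ₂ = Rot 0 0 φz * Rot θ' 0 φ' ∧
      Rot θ₁ 0 φ₁ * Rot θ₂ 0 φ₂ = Rot θ'' 0 φ'' * Rot Θ 0 φm) :=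
  stmt4_general Θ hΘ θ₁ θ₂ h1 h2 φ₁ φ₂
end

section
/- Let θ ∈ [0,π), ψ ∈ [0,π), φ ∈ [0,4π). Define β₀ = Arg( cos(φ/2) + i·sin(φ/2)·cos θ ) + ψ, β₁ = Arg( cos(φ/2) + i·sin(φ/2)·cos θ ) − ψ, and γ = 2·arcsin( sin θ · sin(φ/2) ). Then R(θ,ψ,φ) = R(0,0,β₀)·R(π/2,0,γ)·R(0,0,β₁); i.e., every SU(2) rotation admits this explicit z–x–z decomposition. -/
/-!
Rotations about ẑ are diagonal, `R(0,0,β) = diag(e^{-iβ/2}, e^{iβ/2})`, so the product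
`R(0,0,α+ψ) · R(π/2,0,γ) · R(0,0,α-ψ)` has diagonal `cos(γ/2) · e^{∓iα}` and off-diagonal
`-i sin(γ/2) e^{∓iψ}`. With `s = sin θ sin(φ/2)` and `γ = 2 arcsin s`, the off-diagonal entries are
those of `R(θ,ψ,φ)`; its diagonal entries are `z̄, z` for `z = cos(φ/2) + i sin(φ/2) cos θ`, and
`|z|² = 1 - s² = cos²(γ/2)`, so the polar form `z = |z| e^{i arg z}` matches them with `α = arg z`.
-/

open Real

lemma Rot_zero_zero (β : ℝ) :
    Rot 0 0 β = !![Complex.exp (-(β / 2) * Complex.I), 0; 0, Complex.exp (β / 2 * Complex.I)] := by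
  rw [Complex.exp_mul_I, Complex.exp_mul_I, Complex.cos_neg, Complex.sin_neg]
  ext i j; fin_cases i <;> fin_cases j <;> simp [Rot] <;> ring

lemma Rot_pi_div_two_zero (γ : ℝ) :
    Rot (π / 2) 0 γ = !![(Real.cos (γ / 2) : ℂ), -Complex.I * Real.sin (γ / 2);
      -Complex.I * Real.sin (γ / 2), Real.cos (γ / 2)] := by
  ext i j; fin_cases i <;> fin_cases j <;> simp [Rot]

lemma Rot_z_mul_Rot_x_mul_Rot_z (α ψ γ : ℝ) :
    Rot 0 0 (α + ψ) * Rot (π / 2) 0 γ * Rot 0 0 (α - ψ) =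
      !![Real.cos (γ / 2) * Complex.exp (-α * Complex.I),
          -Complex.I * Real.sin (γ / 2) * Complex.exp (-(Complex.I * ψ));
         -Complex.I * Real.sin (γ / 2) * Complex.exp (Complex.I * ψ),
          Real.cos (γ / 2) * Complex.exp (α * Complex.I)] := by
  rw [Rot_zero_zero, Rot_zero_zero, Rot_pi_div_two_zero]
  ext i j; fin_cases i <;> fin_cases j <;> simp [Matrix.mul_apply]
  all_goals rw [mul_right_comm, ← Complex.exp_add]; ring_nf

lemma Complex.norm_mul_exp_neg_arg_mul_I (z : ℂ) :
    ‖z‖ * Complex.exp (-z.arg * Complex.I) = (starRingEnd ℂ) z := by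
  conv_rhs => rw [← Complex.norm_mul_exp_arg_mul_I z]
  rw [map_mul, Complex.conj_ofReal, ← Complex.exp_conj, map_mul, Complex.conj_ofReal,
    Complex.conj_I, mul_neg, neg_mul]

lemma norm_cos_add_I_mul_sin_mul_cos (θ x : ℝ) :
    ‖(Real.cos x : ℂ) + Complex.I * Real.sin x * Real.cos θ‖ =
      Real.cos (arcsin (Real.sin θ * Real.sin x)) := by
  rw [cos_arcsin, show (Real.cos x : ℂ) + Complex.I * Real.sin x * Real.cos θ =
      Real.cos x + (Real.sin x * Real.cos θ : ℝ) * Complex.I by push_cast; ring,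
    Complex.norm_add_mul_I]
  congr 1
  linear_combination Real.sin x ^ 2 * sin_sq_add_cos_sq θ + sin_sq_add_cos_sq x

theorem stmt9_general (θ ψ φ : ℝ) :
    Rot θ ψ φ =
      Rot 0 0 (Complex.arg ((Real.cos (φ/2) : ℂ) +
          Complex.I * (Real.sin (φ/2) : ℂ) * (Real.cos θ : ℂ)) + ψ) *
      Rot (π/2) 0 (2 * Real.arcsin (Real.sin θ * Real.sin (φ/2))) *
      Rot 0 0 (Complex.arg ((Real.cos (φ/2) : ℂ) +
          Complex.I * (Real.sin (φ/2) : ℂ) * (Real.cos θ : ℂ)) - ψ) := by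
  have hs : Real.sin θ * Real.sin (φ/2) ∈ Set.Icc (-1) 1 := by
    rw [Set.mem_Icc, ← abs_le, abs_mul]
    exact mul_le_one₀ (abs_sin_le_one θ) (abs_nonneg _) (abs_sin_le_one _)
  rw [Rot_z_mul_Rot_x_mul_Rot_z, mul_div_cancel_left₀ _ two_ne_zero,
    sin_arcsin hs.1 hs.2, ← norm_cos_add_I_mul_sin_mul_cos, Complex.norm_mul_exp_neg_arg_mul_I,
    Complex.norm_mul_exp_arg_mul_I]
  simp only [map_add, map_mul, Complex.conj_ofReal, Complex.conj_I]
  ext i j; fin_cases i <;> fin_cases j <;> simp [Rot] <;> ring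

theorem stmt9 (θ ψ φ : ℝ) (hθ : θ ∈ Set.Ico 0 π) (hψ : ψ ∈ Set.Ico 0 π)
    (hφ : φ ∈ Set.Ico 0 (4*π)) :
    Rot θ ψ φ =
      Rot 0 0 (Complex.arg ((Real.cos (φ/2) : ℂ) +
          Complex.I * (Real.sin (φ/2) : ℂ) * (Real.cos θ : ℂ)) + ψ) *
      Rot (π/2) 0 (2 * Real.arcsin (Real.sin θ * Real.sin (φ/2))) *
      Rot 0 0 (Complex.arg ((Real.cos (φ/2) : ℂ) +
          Complex.I * (Real.sin (φ/2) : ℂ) * (Real.cos θ : ℂ)) - ψ) :=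
  stmt9_general θ ψ φ
end

section
/- Fix Θ ∈ (0,π/2] and Ψ ∈ [0,π], and let l be a positive integer. Let θ ∈ [0,π), ψ ∈ [0,π), φ ∈ [0,4π). Then there exist β₀, β₁, …, β_{l−1} ∈ [0,4π) and γ₁, …, γ_{l−1} ∈ [0,4π) such that R(θ,ψ,φ) = R(0,0,β₀)·R(Θ,Ψ,γ₁)·R(0,0,β₁)·⋯·R(Θ,Ψ,γ_{l−1})·R(0,0,β_{l−1}) if and only if |δ₁(θ,φ)| ≤ (l−1)·Θ. -/
/-
Write an element of SU(2) through its Cayley–Klein parameters `(x, y)`, `|x|² + |y|² = 1`.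
Then `arcsin |y|` is half the angle by which the rotation moves the z-axis, and for `R(θ,ψ,φ)` it
equals `|δ₁(θ,φ)|`. This tilt is subadditive (the spherical triangle inequality; concretely
`|x₁y₂ + y₁x̄₂| ≤ cos δ₁ sin δ₂ + sin δ₁ cos δ₂`), z-rotations have tilt 0 and `R(Θ,Ψ,γ)` has tilt
at most `Θ`, which gives necessity. Conversely, a matrix of tilt `δ ≤ kΘ` factors as
`R(0,0,a) R(Θ,Ψ,γ) R'` with `R'` of tilt `δ - min δ Θ`: choose `γ` so that `R(Θ,Ψ,-γ)` has tilt
`min δ Θ`, and the phase `a` so that the two contributions to the off-diagonal entry of `R'` are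
antiparallel; then induct on `k`. Angles only matter modulo `4π`.
-/

open Real

/-- δ₁(θ,φ) = arcsin( sin θ · sin(φ/2) ). -/
noncomputable def delta1 (θ φ : ℝ) : ℝ := Real.arcsin (Real.sin θ * Real.sin (φ/2))

open ComplexConjugate
open Complex (I normSq)

noncomputable def cayleyKlein (x y : ℂ) : Matrix (Fin 2) (Fin 2) ℂ :=
  !![x, y; -conj y, conj x]

theorem cayleyKlein_mul (x₁ y₁ x₂ y₂ : ℂ) :
    cayleyKlein x₁ y₁ * cayleyKlein x₂ y₂ =
      cayleyKlein (x₁ * x₂ - y₁ * conj y₂) (x₁ * y₂ + y₁ * conj x₂) := by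
  ext i j
  fin_cases i <;> fin_cases j <;> simp [cayleyKlein] <;> ring

theorem cayleyKlein_one_zero : cayleyKlein 1 0 = 1 := by
  simp [cayleyKlein, Matrix.one_fin_two]

theorem normSq_cayleyKlein_mul (x₁ y₁ x₂ y₂ : ℂ) :
    normSq (x₁ * x₂ - y₁ * conj y₂) + normSq (x₁ * y₂ + y₁ * conj x₂) =
      (normSq x₁ + normSq y₁) * (normSq x₂ + normSq y₂) := by
  simp only [Complex.normSq_apply, Complex.mul_re, Complex.mul_im, Complex.sub_re, Complex.sub_im,
    Complex.add_re, Complex.add_im, Complex.conj_re, Complex.conj_im]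
  ring

noncomputable def rotA (θ φ : ℝ) : ℂ :=
  cos (φ / 2) - I * sin (φ / 2) * cos θ

noncomputable def rotB (θ ψ φ : ℝ) : ℂ :=
  -I * sin (φ / 2) * sin θ * Complex.exp (-(I * ψ))

theorem Rot_eq_cayleyKlein (θ ψ φ : ℝ) : Rot θ ψ φ = cayleyKlein (rotA θ φ) (rotB θ ψ φ) := by
  ext i j
  fin_cases i <;> fin_cases j <;>
    simp [Rot, cayleyKlein, rotA, rotB, ← Complex.exp_conj, -Complex.ofReal_sin,
      -Complex.ofReal_cos]

theorem Rot_apply_zero_one (θ ψ φ : ℝ) : Rot θ ψ φ 0 1 = rotB θ ψ φ := rfl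

theorem norm_rotB (θ ψ φ : ℝ) : ‖rotB θ ψ φ‖ = |sin (φ / 2)| * |sin θ| := by
  simp [rotB, Complex.norm_exp, -Complex.ofReal_sin]

theorem normSq_rotA_add_normSq_rotB (θ ψ φ : ℝ) : normSq (rotA θ φ) + normSq (rotB θ ψ φ) = 1 := by
  rw [Complex.normSq_eq_norm_sq (rotB θ ψ φ), norm_rotB, mul_pow, sq_abs, sq_abs]
  simp only [rotA, Complex.normSq_apply, Complex.sub_re, Complex.sub_im, Complex.mul_re,
    Complex.mul_im, Complex.I_re, Complex.I_im, Complex.ofReal_re, Complex.ofReal_im]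
  linear_combination sin (φ / 2) ^ 2 * Real.sin_sq_add_cos_sq θ + Real.sin_sq_add_cos_sq (φ / 2)

theorem rotA_neg (θ φ : ℝ) : rotA θ (-φ) = conj (rotA θ φ) := by
  simp only [rotA, neg_div, Real.cos_neg, Real.sin_neg, map_sub, map_mul, Complex.conj_ofReal,
    Complex.conj_I, Complex.ofReal_neg]
  ring

theorem rotB_neg (θ ψ φ : ℝ) : rotB θ ψ (-φ) = -rotB θ ψ φ := by
  simp only [rotB, neg_div, Real.sin_neg, Complex.ofReal_neg]
  ring

theorem Rot_mul_Rot_neg (θ ψ φ : ℝ) : Rot θ ψ φ * Rot θ ψ (-φ) = 1 := by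
  rw [Rot_eq_cayleyKlein, Rot_eq_cayleyKlein, cayleyKlein_mul, rotA_neg, rotB_neg, map_neg,
    Complex.conj_conj, Complex.mul_conj, mul_neg, sub_neg_eq_add, Complex.mul_conj,
    ← Complex.ofReal_add, normSq_rotA_add_normSq_rotB, Complex.ofReal_one, ← cayleyKlein_one_zero]
  congr 1
  ring

theorem Rot_neg_mul_Rot (θ ψ φ : ℝ) : Rot θ ψ (-φ) * Rot θ ψ φ = 1 := by
  simpa using Rot_mul_Rot_neg θ ψ (-φ)

theorem Rot_periodic (θ ψ : ℝ) : Function.Periodic (Rot θ ψ) (4 * π) := by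
  intro φ
  have h : (φ + 4 * π) / 2 = φ / 2 + 2 * π := by ring
  simp only [Rot, h, Real.cos_add_two_pi, Real.sin_add_two_pi]

theorem Rot_toIcoMod (θ ψ φ : ℝ) (hp : 0 < 4 * π) : Rot θ ψ (toIcoMod hp 0 φ) = Rot θ ψ φ :=
  (Rot_periodic θ ψ).sub_zsmul_eq _

theorem exists_Rot_zero_eq_cayleyKlein {e : ℂ} (he : ‖e‖ = 1) (ψ : ℝ) :
    ∃ a : ℝ, Rot 0 ψ a = cayleyKlein e 0 := by
  refine ⟨-2 * e.arg, ?_⟩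
  have he0 : e ≠ 0 := by rintro rfl; simp at he
  have hA : rotA 0 (-2 * e.arg) = e := by
    rw [rotA, show -2 * e.arg / 2 = -e.arg by ring, Real.cos_neg, Real.sin_neg, Real.cos_zero]
    apply Complex.ext <;>
      simp [Complex.cos_arg he0, Complex.sin_arg, he, -Complex.ofReal_sin, -Complex.ofReal_cos]
  rw [Rot_eq_cayleyKlein, hA]
  simp [rotB]

theorem arcsin_le_of_le_sin {t d : ℝ} (hd : -(π / 2) ≤ d) (h : t ≤ sin d) :
    arcsin t ≤ d := by
  rcases lt_or_ge d (π / 2) with hd' | hd'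
  · exact (Real.arcsin_le_iff_le_sin' ⟨hd, hd'⟩).2 h
  · exact (Real.arcsin_le_pi_div_two t).trans hd'

theorem abs_arcsin (t : ℝ) : |arcsin t| = arcsin |t| := by
  rcases le_total 0 t with ht | ht
  · rw [abs_of_nonneg ht, abs_of_nonneg (Real.arcsin_nonneg.2 ht)]
  · rw [abs_of_nonpos ht, abs_of_nonpos (Real.arcsin_nonpos.2 ht), Real.arcsin_neg]

theorem norm_le_one_of_normSq_add_normSq_eq_one {x y : ℂ} (h : normSq x + normSq y = 1) :
    ‖y‖ ≤ 1 := by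
  have : ‖y‖ ^ 2 ≤ 1 := by rw [Complex.sq_norm]; linarith [Complex.normSq_nonneg x]
  nlinarith [norm_nonneg y]

theorem sin_arcsin_norm_of_normSq_add_normSq_eq_one {x y : ℂ} (h : normSq x + normSq y = 1) :
    sin (arcsin ‖y‖) = ‖y‖ :=
  Real.sin_arcsin (by linarith [norm_nonneg y]) (norm_le_one_of_normSq_add_normSq_eq_one h)

theorem cos_arcsin_norm_of_normSq_add_normSq_eq_one {x y : ℂ} (h : normSq x + normSq y = 1) :
    cos (arcsin ‖y‖) = ‖x‖ := by
  rw [Real.cos_arcsin, Complex.sq_norm, Complex.norm_def]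
  congr 1
  linarith

def TiltLE (M : Matrix (Fin 2) (Fin 2) ℂ) (k : ℝ) : Prop :=
  ∃ x y : ℂ, M = cayleyKlein x y ∧ normSq x + normSq y = 1 ∧ arcsin ‖y‖ ≤ k

theorem TiltLE.arcsin_norm_apply_le {M : Matrix (Fin 2) (Fin 2) ℂ} {k : ℝ} (hM : TiltLE M k) :
    arcsin ‖M 0 1‖ ≤ k := by
  obtain ⟨x, y, rfl, -, hk⟩ := hM
  simpa [cayleyKlein] using hk

theorem TiltLE.mul {M N : Matrix (Fin 2) (Fin 2) ℂ} {k l : ℝ} (hM : TiltLE M k)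
    (hN : TiltLE N l) : TiltLE (M * N) (k + l) := by
  obtain ⟨x₁, y₁, rfl, h₁, hk⟩ := hM
  obtain ⟨x₂, y₂, rfl, h₂, hl⟩ := hN
  refine ⟨_, _, cayleyKlein_mul .., by rw [normSq_cayleyKlein_mul, h₁, h₂, one_mul], ?_⟩
  have hδ₁ := Real.arcsin_nonneg.2 (norm_nonneg y₁)
  have hδ₂ := Real.arcsin_nonneg.2 (norm_nonneg y₂)
  have hsin : ‖x₁ * y₂ + y₁ * conj x₂‖ ≤ sin (arcsin ‖y₁‖ + arcsin ‖y₂‖) :=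
    calc ‖x₁ * y₂ + y₁ * conj x₂‖ ≤ ‖x₁‖ * ‖y₂‖ + ‖y₁‖ * ‖x₂‖ := by
          simpa only [norm_mul, Complex.norm_conj] using norm_add_le (x₁ * y₂) (y₁ * conj x₂)
      _ = _ := by
          rw [Real.sin_add, sin_arcsin_norm_of_normSq_add_normSq_eq_one h₁,
            sin_arcsin_norm_of_normSq_add_normSq_eq_one h₂,
            cos_arcsin_norm_of_normSq_add_normSq_eq_one h₁,
            cos_arcsin_norm_of_normSq_add_normSq_eq_one h₂]
          ring
  exact (arcsin_le_of_le_sin (by linarith [Real.pi_pos]) hsin).trans (add_le_add hk hl)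

theorem TiltLE.list_prod {L : List (Matrix (Fin 2) (Fin 2) ℂ)} {k : ℝ}
    (h : ∀ M ∈ L, TiltLE M k) : TiltLE L.prod (L.length * k) := by
  induction L with
  | nil => exact ⟨1, 0, cayleyKlein_one_zero.symm, by simp, by simp⟩
  | cons M L ih =>
    rw [List.prod_cons, List.length_cons, Nat.cast_succ, add_one_mul, add_comm]
    exact (h M List.mem_cons_self).mul (ih fun N hN => h N (List.mem_cons_of_mem M hN))

theorem tiltLE_Rot_zero (ψ φ : ℝ) : TiltLE (Rot 0 ψ φ) 0 :=
  ⟨_, _, Rot_eq_cayleyKlein 0 ψ φ, normSq_rotA_add_normSq_rotB 0 ψ φ, by simp [norm_rotB]⟩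

theorem tiltLE_Rot {Θ : ℝ} (h₀ : 0 ≤ Θ) (hπ : Θ ≤ π) (Ψ γ : ℝ) : TiltLE (Rot Θ Ψ γ) Θ := by
  refine ⟨_, _, Rot_eq_cayleyKlein Θ Ψ γ, normSq_rotA_add_normSq_rotB Θ Ψ γ, ?_⟩
  refine arcsin_le_of_le_sin (by linarith [Real.pi_pos]) ?_
  rw [norm_rotB, abs_of_nonneg (Real.sin_nonneg_of_nonneg_of_le_pi h₀ hπ)]
  exact mul_le_of_le_one_left (Real.sin_nonneg_of_nonneg_of_le_pi h₀ hπ) (Real.abs_sin_le_one _)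

theorem tiltLE_Rot_prod {Θ : ℝ} (h₀ : 0 ≤ Θ) (hπ : Θ ≤ π) (Ψ : ℝ) (β γ : ℕ → ℝ) (k : ℕ) :
    TiltLE (Rot 0 0 (β 0) *
      ((List.range k).map fun i => Rot Θ Ψ (γ (i + 1)) * Rot 0 0 (β (i + 1))).prod) (k * Θ) := by
  have hfactors : ∀ M ∈ (List.range k).map fun i => Rot Θ Ψ (γ (i + 1)) * Rot 0 0 (β (i + 1)),
      TiltLE M Θ := by
    simp only [List.mem_map, List.mem_range]
    rintro _ ⟨i, -, rfl⟩
    simpa using (tiltLE_Rot h₀ hπ Ψ (γ (i + 1))).mul (tiltLE_Rot_zero 0 (β (i + 1)))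
  simpa using (tiltLE_Rot_zero 0 (β 0)).mul (TiltLE.list_prod hfactors)

theorem exists_norm_mul_add_conj_mul_eq (u v : ℂ) :
    ∃ e : ℂ, ‖e‖ = 1 ∧ ‖e * u + conj e * v‖ = |‖u‖ - ‖v‖| := by
  set σ := (u.arg + v.arg) / 2
  set t := (v.arg - u.arg + π) / 2
  refine ⟨Complex.exp (t * I), Complex.norm_exp_ofReal_mul_I t, ?_⟩
  -- `e * u` and `conj e * v` point in the opposite directions `± I * exp (σ * I)`
  have hu : Complex.exp (t * I) * Complex.exp (u.arg * I) = Complex.exp (σ * I) * I := by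
    rw [← Complex.exp_add,
      show (t : ℂ) * I + u.arg * I = σ * I + π / 2 * I by push_cast [σ, t]; ring, Complex.exp_add, Complex.exp_pi_div_two_mul_I]
  have hv : conj (Complex.exp (t * I)) * Complex.exp (v.arg * I) = Complex.exp (σ * I) * -I := by
    rw [← Complex.exp_conj, map_mul, Complex.conj_ofReal, Complex.conj_I, ← Complex.exp_add,
      show (t : ℂ) * -I + v.arg * I = σ * I + -(π / 2 * I) by push_cast [σ, t]; ring,
      Complex.exp_add, Complex.exp_neg, Complex.exp_pi_div_two_mul_I, Complex.inv_I]
  have hsum : Complex.exp (t * I) * u + conj (Complex.exp (t * I)) * v =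
      ((‖u‖ - ‖v‖ : ℝ) : ℂ) * (Complex.exp (σ * I) * I) := by
    conv_lhs => rw [← Complex.norm_mul_exp_arg_mul_I u, ← Complex.norm_mul_exp_arg_mul_I v,
      mul_left_comm (Complex.exp _), hu, mul_left_comm (conj _), hv]
    push_cast
    ring
  rw [hsum, norm_mul, norm_mul, Complex.norm_exp_ofReal_mul_I, Complex.norm_I, Complex.norm_real,
    Real.norm_eq_abs, mul_one, mul_one]

theorem exists_norm_rotB_eq {Θ s : ℝ} (hs₀ : 0 ≤ s) (hs : s ≤ |sin Θ|) (Ψ : ℝ) :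
    ∃ γ : ℝ, ‖rotB Θ Ψ γ‖ = s := by
  rcases eq_or_ne (sin Θ) 0 with hΘ | hΘ
  · exact ⟨0, by simp [norm_rotB, hΘ, le_antisymm (hs.trans_eq (by simp [hΘ])) hs₀]⟩
  have hr₀ : 0 ≤ s / |sin Θ| := div_nonneg hs₀ (abs_nonneg _)
  have hr₁ : s / |sin Θ| ≤ 1 := div_le_one_of_le₀ hs (abs_nonneg _)
  refine ⟨2 * arcsin (s / |sin Θ|), ?_⟩
  rw [norm_rotB, mul_div_cancel_left₀ _ two_ne_zero, Real.sin_arcsin (by linarith) hr₁,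
    abs_of_nonneg hr₀, div_mul_cancel₀ _ (abs_ne_zero.2 hΘ)]

theorem exists_Rot_zero_mul_Rot_mul_cayleyKlein {Θ : ℝ} (h₀ : 0 ≤ Θ) (hΘ : Θ ≤ π / 2) (Ψ : ℝ)
    {x y : ℂ} (hxy : normSq x + normSq y = 1) :
    ∃ (a γ : ℝ) (X Y : ℂ), cayleyKlein x y = Rot 0 0 a * (Rot Θ Ψ γ * cayleyKlein X Y) ∧
      normSq X + normSq Y = 1 ∧
      arcsin ‖Y‖ = arcsin ‖y‖ - min (arcsin ‖y‖) Θ := by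
  set δ := arcsin ‖y‖
  set ε := min δ Θ
  have hδ₀ : 0 ≤ δ := Real.arcsin_nonneg.2 (norm_nonneg y)
  have hδ : δ ≤ π / 2 := Real.arcsin_le_pi_div_two _
  have hε₀ : 0 ≤ ε := le_min hδ₀ h₀
  have hεδ : ε ≤ δ := min_le_left δ Θ
  have hεΘ : ε ≤ Θ := min_le_right δ Θ
  have hsinε : sin ε ≤ |sin Θ| :=
    (Real.sin_le_sin_of_le_of_le_pi_div_two (by linarith) hΘ hεΘ).trans (le_abs_self _)
  obtain ⟨γ, hq⟩ :=
    exists_norm_rotB_eq (Real.sin_nonneg_of_nonneg_of_le_pi hε₀ (by linarith)) hsinε Ψ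
  set p := rotA Θ γ
  set q := rotB Θ Ψ γ
  have hp : ‖p‖ = cos ε := by
    rw [← cos_arcsin_norm_of_normSq_add_normSq_eq_one (normSq_rotA_add_normSq_rotB Θ Ψ γ), hq,
      Real.arcsin_sin (by linarith) (by linarith)]
  obtain ⟨e, he, hY⟩ := exists_norm_mul_add_conj_mul_eq (p * y) (q * conj x)
  obtain ⟨a, ha⟩ := exists_Rot_zero_eq_cayleyKlein he 0
  have hex : normSq (e * x) + normSq (e * y) = 1 := by
    rw [Complex.normSq_mul, Complex.normSq_mul, ← mul_add, hxy, Complex.normSq_eq_norm_sq, he]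
    norm_num
  refine ⟨-a, -γ, p * (e * x) - q * conj (e * y), p * (e * y) + q * conj (e * x), ?_, ?_, ?_⟩
  · have h : Rot Θ Ψ γ * (Rot 0 0 a * cayleyKlein x y) =
        cayleyKlein (p * (e * x) - q * conj (e * y)) (p * (e * y) + q * conj (e * x)) := by
      rw [ha, Rot_eq_cayleyKlein, cayleyKlein_mul, cayleyKlein_mul]
      simp [p, q]
    rw [← h, ← mul_assoc (Rot Θ Ψ (-γ)), Rot_neg_mul_Rot, one_mul, ← mul_assoc, Rot_neg_mul_Rot,
      one_mul]
  · rw [normSq_cayleyKlein_mul, normSq_rotA_add_normSq_rotB, hex, one_mul]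
  · have hy : ‖y‖ = sin δ := (sin_arcsin_norm_of_normSq_add_normSq_eq_one hxy).symm
    have hx : ‖x‖ = cos δ := (cos_arcsin_norm_of_normSq_add_normSq_eq_one hxy).symm
    have hnorm : ‖p * (e * y) + q * conj (e * x)‖ = sin (δ - ε) := by
      rw [show p * (e * y) + q * conj (e * x) = e * (p * y) + conj e * (q * conj x) by
          rw [map_mul]; ring,
        hY, norm_mul, norm_mul, Complex.norm_conj, hp, hq, hy, hx,
        show cos ε * sin δ - sin ε * cos δ = sin (δ - ε) by
          rw [Real.sin_sub]; ring]
      exact abs_of_nonneg (Real.sin_nonneg_of_nonneg_of_le_pi (by linarith) (by linarith))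
    rw [hnorm, Real.arcsin_sin (by linarith) (by linarith)]

theorem exists_Rot_prod_eq_cayleyKlein {Θ : ℝ} (h₀ : 0 ≤ Θ) (hΘ : Θ ≤ π / 2) (Ψ : ℝ) (k : ℕ)
    {x y : ℂ} (hxy : normSq x + normSq y = 1) (hk : arcsin ‖y‖ ≤ k * Θ) :
    ∃ β γ : ℕ → ℝ, cayleyKlein x y =
      Rot 0 0 (β 0) * ((List.range k).map fun i => Rot Θ Ψ (γ i) * Rot 0 0 (β (i + 1))).prod := by
  induction k generalizing x y with
  | zero =>
    have hδ : arcsin ‖y‖ = 0 :=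
      le_antisymm (by simpa using hk) (Real.arcsin_nonneg.2 (norm_nonneg y))
    have hy : y = 0 := by
      rw [← norm_eq_zero, ← sin_arcsin_norm_of_normSq_add_normSq_eq_one hxy, hδ, Real.sin_zero]
    have hx : ‖x‖ = 1 := by
      rw [← cos_arcsin_norm_of_normSq_add_normSq_eq_one hxy, hδ, Real.cos_zero]
    obtain ⟨a, ha⟩ := exists_Rot_zero_eq_cayleyKlein hx 0
    exact ⟨fun _ => a, fun _ => 0, by simp [ha, hy]⟩
  | succ k ih =>
    obtain ⟨a, γ, X, Y, hM, hXY, hY⟩ := exists_Rot_zero_mul_Rot_mul_cayleyKlein h₀ hΘ Ψ hxy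
    have hk' : arcsin ‖Y‖ ≤ k * Θ := by
      push_cast at hk
      rcases min_cases (arcsin ‖y‖) Θ with ⟨hmin, -⟩ | ⟨hmin, -⟩ <;>
        rw [hY, hmin] <;> nlinarith [k.cast_nonneg (α := ℝ)]
    obtain ⟨β, c, h⟩ := ih hXY hk'
    refine ⟨fun | 0 => a | i + 1 => β i, fun | 0 => γ | i + 1 => c i, ?_⟩
    rw [hM, h, List.range_succ_eq_map, List.map_cons, List.prod_cons, List.map_map]
    simp only [mul_assoc]
    rfl

theorem abs_delta1_eq_arcsin_norm_Rot_apply (θ ψ φ : ℝ) :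
    |delta1 θ φ| = arcsin ‖Rot θ ψ φ 0 1‖ := by
  rw [delta1, abs_arcsin, Rot_apply_zero_one, norm_rotB, abs_mul, mul_comm]

theorem stmt10_general (Θ Ψ : ℝ) (hΘ : Θ ∈ Set.Ioc 0 (π/2))
    (l : ℕ)
    (θ ψ φ : ℝ) :
    (∃ β γ : ℕ → ℝ,
      (∀ i < l, β i ∈ Set.Ico 0 (4*π)) ∧
      (∀ i, 1 ≤ i → i ≤ l - 1 → γ i ∈ Set.Ico 0 (4*π)) ∧
      Rot θ ψ φ =
        Rot 0 0 (β 0) *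
          ((List.range (l - 1)).map (fun i => Rot Θ Ψ (γ (i+1)) * Rot 0 0 (β (i+1)))).prod) ↔
    |delta1 θ φ| ≤ (l - 1 : ℕ) * Θ := by
  rw [abs_delta1_eq_arcsin_norm_Rot_apply θ ψ]
  constructor
  · rintro ⟨β, γ, -, -, h⟩
    rw [h]
    have hΘπ : Θ ≤ π := by linarith [hΘ.2, Real.pi_pos]
    exact (tiltLE_Rot_prod hΘ.1.le hΘπ Ψ β γ (l - 1)).arcsin_norm_apply_le
  · intro h
    have h4π : 0 < 4 * π := by positivity
    obtain ⟨β, γ, hβγ⟩ := exists_Rot_prod_eq_cayleyKlein hΘ.1.le hΘ.2 Ψ (l - 1)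
      (normSq_rotA_add_normSq_rotB θ ψ φ) h
    refine ⟨fun i => toIcoMod h4π 0 (β i), fun i => toIcoMod h4π 0 (γ (i - 1)),
      fun i _ => toIcoMod_mem_Ico' h4π _, fun i _ _ => toIcoMod_mem_Ico' h4π _, ?_⟩
    simp only [Rot_toIcoMod, Nat.add_sub_cancel]
    rw [Rot_eq_cayleyKlein]
    exact hβγ

theorem stmt10 (Θ Ψ : ℝ) (hΘ : Θ ∈ Set.Ioc 0 (π/2)) (hΨ : Ψ ∈ Set.Icc 0 π)
    (l : ℕ) (hl : 1 ≤ l)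
    (θ ψ φ : ℝ) (hθ : θ ∈ Set.Ico 0 π) (hψ : ψ ∈ Set.Ico 0 π) (hφ : φ ∈ Set.Ico 0 (4*π)) :
    (∃ β γ : ℕ → ℝ,
      (∀ i < l, β i ∈ Set.Ico 0 (4*π)) ∧
      (∀ i, 1 ≤ i → i ≤ l - 1 → γ i ∈ Set.Ico 0 (4*π)) ∧
      Rot θ ψ φ =
        Rot 0 0 (β 0) *
          ((List.range (l - 1)).map (fun i => Rot Θ Ψ (γ (i+1)) * Rot 0 0 (β (i+1)))).prod) ↔
    |delta1 θ φ| ≤ (l - 1 : ℕ) * Θ :=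
  stmt10_general Θ Ψ hΘ l θ ψ φ
end
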